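/- arXiv:0911.0714 — 6 statements merged into one kernel-verified Lean document; each statement's English description precedes it below -/
import Mathlib

section
/- For every n ≥ 1 and every i with 1 ≤ i ≤ n, the partial derivative of the n-th quantized generalized Chebyshev polynomial with respect to t_i satisfies ∂P_n(q_1,…,q_n,t_1,…,t_n)/∂t_i = P_{i−1}(q_1,…,q_{i−1},t_1,…,t_{i−1}) · P_{n−i}(q_{i+1},…,q_n,t_{i+1},…,t_n), where P_0 = 1. -/
noncomputable section

/-- The quantized generalized Chebyshev polynomials, evaluated in any commutative
ring: `genCheb n q t` is `P_n(q_1,…,q_n,t_1,…,t_n)` (indices are 1-based), defined by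
`P_0 = 1`, `P_1 = t_1`, `P_n = t_n·P_{n-1} - q_n·P_{n-2}`. -/
def genCheb {R : Type*} [CommRing R] : ℕ → (ℕ → R) → (ℕ → R) → R
  | 0, _, _ => 1
  | 1, _, t => t 1
  | n + 2, q, t => t (n + 2) * genCheb (n + 1) q t - q (n + 2) * genCheb n q t

/-- The variable `q_i` in `ℤ[q_1,q_2,…,t_1,t_2,…]`. -/
def Qv (i : ℕ) : MvPolynomial (ℕ ⊕ ℕ) ℤ := MvPolynomial.X (Sum.inl i)

/-- The variable `t_i` in `ℤ[q_1,q_2,…,t_1,t_2,…]`. -/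
def Tv (i : ℕ) : MvPolynomial (ℕ ⊕ ℕ) ℤ := MvPolynomial.X (Sum.inr i)

open MvPolynomial

lemma pderiv_Qv (i j : ℕ) : pderiv (Sum.inr i) (Qv j) = 0 := by
  simp [Qv, pderiv_X]

lemma pderiv_Tv (i j : ℕ) (h : i ≠ j) : pderiv (Sum.inr i) (Tv j) = 0 := by
  simp [Tv, pderiv_X, Pi.single_apply, h]

lemma pderiv_Tv_self (i : ℕ) : pderiv (Sum.inr i) (Tv i) = 1 := by
  simp [Tv, pderiv_X]

lemma pderiv_genCheb_zero : ∀ n i : ℕ, n < i →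
    pderiv (Sum.inr i) (genCheb n Qv Tv) = 0
  | 0, i, h => by simp [genCheb]
  | 1, i, h => by
      simp [genCheb, pderiv_Tv i 1 (by omega)]
  | n+2, i, h => by
      simp only [genCheb, map_sub, pderiv_mul,
        pderiv_genCheb_zero (n+1) i (by omega), pderiv_genCheb_zero n i (by omega),
        pderiv_Qv, pderiv_Tv i (n+2) (by omega)]
      ring

theorem pderiv_genCheb' : ∀ n i : ℕ, 1 ≤ n → 1 ≤ i → i ≤ n →
    MvPolynomial.pderiv (Sum.inr i) (genCheb n Qv Tv) =
      genCheb (i - 1) Qv Tv *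
        genCheb (n - i) (fun j => Qv (i + j)) (fun j => Tv (i + j))
  | 0, i, hn, hi1, hin => by omega
  | 1, i, hn, hi1, hin => by
      have : i = 1 := by omega
      subst this
      simp [genCheb, pderiv_Tv_self]
  | n+2, i, hn, hi1, hin => by
      rcases eq_or_lt_of_le hin with h | h
      · -- i = n + 2
        subst h
        simp only [genCheb, map_sub, pderiv_mul, pderiv_Qv,
          pderiv_genCheb_zero (n+1) (n+2) (by omega),
          pderiv_genCheb_zero n (n+2) (by omega), pderiv_Tv_self]
        show 1 * genCheb (n+1) Qv Tv + _ * 0 - (0 * _ + _ * 0) =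
          genCheb (n + 2 - 1) Qv Tv * genCheb (n + 2 - (n+2)) _ _
        rw [show n + 2 - (n+2) = 0 from by omega, show n + 2 - 1 = n + 1 from by omega]
        show _ = genCheb (n+1) Qv Tv * 1
        ring
      · -- i ≤ n + 1
        have hin' : i ≤ n + 1 := by omega
        rcases eq_or_lt_of_le hin' with h2 | h2
        · -- i = n + 1
          subst h2
          simp only [genCheb, map_sub, pderiv_mul, pderiv_Qv,
            pderiv_genCheb_zero n (n+1) (by omega),
            pderiv_Tv (n+1) (n+2) (by omega),
            pderiv_genCheb' (n+1) (n+1) (by omega) (by omega) le_rfl]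
          rw [show n + 2 - (n+1) = 1 from by omega, show n + 1 - (n+1) = 0 from by omega,
            show (genCheb 0 (fun j => Qv (n+1+j)) fun j => Tv (n+1+j)) = 1 from rfl,
            show (genCheb 1 (fun j => Qv (n+1+j)) fun j => Tv (n+1+j)) = Tv (n+1+1) from rfl,
            show n + 1 + 1 = n + 2 from by omega]
          ring
        · -- i ≤ n
          have hin2 : i ≤ n := by omega
          simp only [genCheb, map_sub, pderiv_mul, pderiv_Qv,
            pderiv_Tv i (n+2) (by omega),
            pderiv_genCheb' (n+1) i (by omega) hi1 hin',
            pderiv_genCheb' n i (by omega) hi1 hin2]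
          rw [show n + 2 - i = (n - i) + 2 from by omega,
            show n + 1 - i = (n - i) + 1 from by omega]
          show 0 * _ + Tv (n+2) * _ - (0 * _ + Qv (n+2) * _) =
            genCheb (i-1) Qv Tv * genCheb (n - i + 2) _ _
          rw [show (genCheb (n - i + 2) (fun j => Qv (i + j)) (fun j => Tv (i + j))) =
            Tv (i + (n - i + 2)) * genCheb (n - i + 1) (fun j => Qv (i + j)) (fun j => Tv (i + j))
            - Qv (i + (n - i + 2)) * genCheb (n - i) (fun j => Qv (i + j)) (fun j => Tv (i + j))
            from rfl,
            show i + (n - i + 2) = n + 2 from by omega]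
          ring

/-- ∂P_n/∂t_i = P_{i-1}(q_1,…,q_{i-1},t_1,…,t_{i-1}) ·
P_{n-i}(q_{i+1},…,q_n,t_{i+1},…,t_n) for 1 ≤ i ≤ n. -/
theorem pderiv_genCheb (n i : ℕ) (hn : 1 ≤ n) (hi1 : 1 ≤ i) (hin : i ≤ n) :
    MvPolynomial.pderiv (Sum.inr i) (genCheb n Qv Tv) =
      genCheb (i - 1) Qv Tv *
        genCheb (n - i) (fun j => Qv (i + j)) (fun j => Tv (i + j)) :=
  pderiv_genCheb' n i hn hi1 hin
end
end

section
/- For every n ≥ 2, the quantized generalized Chebyshev polynomials satisfy the three-term relation P_n(q_1,…,q_n,t_1,…,t_n) = t_1 · P_{n−1}(q_2,…,q_n,t_2,…,t_n) − q_2 · P_{n−2}(q_3,…,q_n,t_3,…,t_n), where P_0 = 1. -/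
noncomputable section

lemma genCheb_aux {R : Type*} [CommRing R] (q t : ℕ → R) (m : ℕ) :
    genCheb (m + 2) q t =
      t 1 * genCheb (m + 1) (fun j => q (1 + j)) (fun j => t (1 + j)) -
        q 2 * genCheb m (fun j => q (2 + j)) (fun j => t (2 + j)) := by
  induction m using Nat.twoStepInduction with
  | zero => simp [genCheb]; ring
  | one => simp [genCheb]; ring
  | more m ih1 ih2 =>
    have e1 : m + 2 + 2 = (m + 2) + 2 := rfl
    rw [show genCheb (m + 2 + 2) q t = t (m + 2 + 2) * genCheb (m + 3) q t
        - q (m + 2 + 2) * genCheb (m + 2) q t from rfl,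
      show genCheb (m + 2 + 1) (fun j => q (1 + j)) (fun j => t (1 + j)) =
        (fun j => t (1 + j)) (m + 1 + 2) * genCheb (m + 2) (fun j => q (1 + j)) (fun j => t (1 + j))
        - (fun j => q (1 + j)) (m + 1 + 2) * genCheb (m + 1) (fun j => q (1 + j)) (fun j => t (1 + j)) from rfl,
      show genCheb (m + 2) (fun j => q (2 + j)) (fun j => t (2 + j)) =
        (fun j => t (2 + j)) (m + 2) * genCheb (m + 1) (fun j => q (2 + j)) (fun j => t (2 + j))
        - (fun j => q (2 + j)) (m + 2) * genCheb m (fun j => q (2 + j)) (fun j => t (2 + j)) from rfl,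
      ih2, ih1]
    simp only []
    have h1 : 1 + (m + 1 + 2) = m + 2 + 2 := by omega
    have h2 : 2 + (m + 2) = m + 2 + 2 := by omega
    rw [h1, h2]
    ring

/-- The three-term relation at the bottom: for n ≥ 2,
`P_n(q_1,…,q_n,t_1,…,t_n) = t_1·P_{n-1}(q_2,…,q_n,t_2,…,t_n) -
q_2·P_{n-2}(q_3,…,q_n,t_3,…,t_n)`, in any commutative ring and for
any values of the variables. -/
theorem genCheb_three_term {R : Type*} [CommRing R] (n : ℕ) (hn : 2 ≤ n)
    (q t : ℕ → R) :
    genCheb n q t =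
      t 1 * genCheb (n - 1) (fun j => q (1 + j)) (fun j => t (1 + j)) -
        q 2 * genCheb (n - 2) (fun j => q (2 + j)) (fun j => t (2 + j)) := by
  obtain ⟨m, rfl⟩ : ∃ m, n = m + 2 := ⟨n - 2, by omega⟩
  simpa using genCheb_aux q t m
end
end

section
/- For every n ≥ 1 and every i with 1 ≤ i ≤ n, the n-th quantized generalized Chebyshev polynomial P_n(q_1,…,q_n,t_1,…,t_n) has degree at most 1 in the variable t_i; equivalently, P_n(q_1,…,q_n,t_1,…,t_n) = t_i·P_{i−1}(q_1,…,q_{i−1},t_1,…,t_{i−1})·P_{n−i}(q_{i+1},…,q_n,t_{i+1},…,t_n) + Q, where Q is a polynomial not involving t_i and P_0 = 1. -/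
noncomputable section

open MvPolynomial in
lemma genCheb_degreeOf_zero (v : ℕ ⊕ ℕ) :
    ∀ m (q t : ℕ → MvPolynomial (ℕ ⊕ ℕ) ℤ),
      (∀ j, 1 ≤ j → j ≤ m → degreeOf v (q j) = 0) →
      (∀ j, 1 ≤ j → j ≤ m → degreeOf v (t j) = 0) →
      degreeOf v (genCheb m q t) = 0 := by
  intro m
  induction m using Nat.strong_induction_on with
  | _ m ih =>
    match m with
    | 0 => intro q t _ _; show degreeOf v (1 : MvPolynomial (ℕ ⊕ ℕ) ℤ) = 0
           rw [← C_1]; exact degreeOf_C 1 v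
    | 1 => intro q t _ ht; exact ht 1 le_rfl le_rfl
    | (n+2) =>
      intro q t hq ht
      have h1 : degreeOf v (genCheb (n+1) q t) = 0 :=
        ih (n+1) (by omega) q t (fun j h1 h2 => hq j h1 (by omega))
          (fun j h1 h2 => ht j h1 (by omega))
      have h0 : degreeOf v (genCheb n q t) = 0 :=
        ih n (by omega) q t (fun j a b => hq j a (by omega)) (fun j a b => ht j a (by omega))
      show degreeOf v (t (n+2) * genCheb (n+1) q t - q (n+2) * genCheb n q t) = 0
      refine Nat.le_zero.mp (le_trans (degreeOf_sub_le _ _ _) ?_)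
      refine max_le (le_trans (degreeOf_mul_le _ _ _) ?_) (le_trans (degreeOf_mul_le _ _ _) ?_)
      · rw [ht (n+2) (by omega) le_rfl, h1]
      · rw [hq (n+2) (by omega) le_rfl, h0]

open MvPolynomial in
lemma degreeOf_Tv (i j : ℕ) (h : i ≠ j) : degreeOf (Sum.inr i) (Tv j) = 0 := by
  rw [Tv, degreeOf_X]; simp [h]

open MvPolynomial in
lemma degreeOf_Qv (i j : ℕ) : degreeOf (Sum.inr i) (Qv j) = 0 := by
  rw [Qv, degreeOf_X]; simp

open MvPolynomial in
lemma genCheb_low (i m : ℕ) (h : m < i) : degreeOf (Sum.inr i) (genCheb m Qv Tv) = 0 :=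
  genCheb_degreeOf_zero _ m Qv Tv (fun j _ _ => degreeOf_Qv i j)
    (fun j _ hj => degreeOf_Tv i j (by omega))

open MvPolynomial in
lemma genCheb_shift (i m : ℕ) :
    degreeOf (Sum.inr i) (genCheb m (fun j => Qv (i + j)) (fun j => Tv (i + j))) = 0 :=
  genCheb_degreeOf_zero _ m _ _ (fun j _ _ => degreeOf_Qv i (i + j))
    (fun j hj _ => degreeOf_Tv i (i + j) (by omega))

open MvPolynomial in
lemma genCheb_key : ∀ n i : ℕ, 1 ≤ i → i ≤ n →
    ∃ Q : MvPolynomial (ℕ ⊕ ℕ) ℤ,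
      genCheb n Qv Tv =
        Tv i * (genCheb (i - 1) Qv Tv *
          genCheb (n - i) (fun j => Qv (i + j)) (fun j => Tv (i + j))) + Q ∧
      degreeOf (Sum.inr i) Q = 0 := by
  intro n
  induction n using Nat.strong_induction_on with
  | _ n ih =>
    match n with
    | 0 => intro i h1 h2; omega
    | 1 =>
      intro i h1 h2
      have : i = 1 := by omega
      subst this
      refine ⟨0, ?_, degreeOf_zero _⟩
      show Tv 1 = Tv 1 * ((1 : MvPolynomial (ℕ ⊕ ℕ) ℤ) * 1) + 0
      ring
    | (n+2) =>
      intro i h1 h2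
      rcases Nat.lt_or_ge i (n+2) with hlt | hge
      · -- i ≤ n+1
        obtain ⟨Q₁, hQ₁, hdQ₁⟩ := ih (n+1) (by omega) i h1 (by omega)
        rcases Nat.lt_or_ge i (n+1) with hlt' | hge'
        · -- i ≤ n
          obtain ⟨Q₂, hQ₂, hdQ₂⟩ := ih n (by omega) i h1 (by omega)
          refine ⟨Tv (n+2) * Q₁ - Qv (n+2) * Q₂, ?_, ?_⟩
          · have e2 : n + 2 - i = (n - i) + 2 := by omega
            have e1 : n + 1 - i = (n - i) + 1 := by omega
            have et : i + (n - i + 2) = n + 2 := by omega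
            have eq' : i + (n - i + 2) = n + 2 := et
            show Tv (n+2) * genCheb (n+1) Qv Tv - Qv (n+2) * genCheb n Qv Tv = _
            rw [hQ₁, hQ₂, e2, e1]
            show _ = Tv i * (genCheb (i-1) Qv Tv *
              (Tv (i + (n - i + 2)) * genCheb (n - i + 1) _ _
                - Qv (i + (n - i + 2)) * genCheb (n - i) _ _)) + _
            rw [et]
            ring
          · refine Nat.le_zero.mp (le_trans (degreeOf_sub_le _ _ _) ?_)
            refine max_le (le_trans (degreeOf_mul_le _ _ _) ?_)
              (le_trans (degreeOf_mul_le _ _ _) ?_)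
            · rw [degreeOf_Tv i (n+2) (by omega), hdQ₁]
            · rw [degreeOf_Qv, hdQ₂]
        · -- i = n+1
          have hi : i = n + 1 := by omega
          refine ⟨Tv (n+2) * Q₁ - Qv (n+2) * genCheb n Qv Tv, ?_, ?_⟩
          · have e1 : n + 1 - i = 0 := by omega
            have e2 : n + 2 - i = 1 := by omega
            rw [e1] at hQ₁
            show Tv (n+2) * genCheb (n+1) Qv Tv - Qv (n+2) * genCheb n Qv Tv = _
            rw [hQ₁, e2]
            show _ = Tv i * (genCheb (i-1) Qv Tv * Tv (i + 1)) + _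
            have : i + 1 = n + 2 := by omega
            rw [this]
            show Tv (n+2) * (Tv i * (genCheb (i-1) Qv Tv * genCheb 0 Qv Tv) + Q₁)
                - Qv (n+2) * genCheb n Qv Tv = _
            show _ = Tv i * (genCheb (i-1) Qv Tv * Tv (n+2)) +
              (Tv (n+2) * Q₁ - Qv (n+2) * genCheb n Qv Tv)
            have h0 : (genCheb 0 Qv Tv : MvPolynomial (ℕ ⊕ ℕ) ℤ) = 1 := rfl
            rw [h0]; ring
          · refine Nat.le_zero.mp (le_trans (degreeOf_sub_le _ _ _) ?_)
            refine max_le (le_trans (degreeOf_mul_le _ _ _) ?_)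
              (le_trans (degreeOf_mul_le _ _ _) ?_)
            · rw [degreeOf_Tv i (n+2) (by omega), hdQ₁]
            · rw [degreeOf_Qv, genCheb_low i n (by omega)]
      · -- i = n+2
        have hi : i = n + 2 := by omega
        subst hi
        refine ⟨-(Qv (n+2) * genCheb n Qv Tv), ?_, ?_⟩
        · have e1 : n + 2 - (n + 2) = 0 := by omega
          have e2 : n + 2 - 1 = n + 1 := by omega
          rw [e1, e2]
          show Tv (n+2) * genCheb (n+1) Qv Tv - Qv (n+2) * genCheb n Qv Tv =
            Tv (n+2) * (genCheb (n+1) Qv Tv * genCheb 0 _ _) + _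
          have h0 : (genCheb 0 (fun j => Qv (n+2+j)) (fun j => Tv (n+2+j))
              : MvPolynomial (ℕ ⊕ ℕ) ℤ) = 1 := rfl
          rw [h0]; ring
        · rw [degreeOf_neg]
          refine Nat.le_zero.mp (le_trans (degreeOf_mul_le _ _ _) ?_)
          rw [degreeOf_Qv, genCheb_low (n+2) n (by omega)]

/-- For 1 ≤ i ≤ n, `P_n` has degree at most 1 in `t_i`; more precisely
`P_n = t_i · P_{i-1}(q_1,…,q_{i-1},t_1,…,t_{i-1}) ·
P_{n-i}(q_{i+1},…,q_n,t_{i+1},…,t_n) + Q` where `Q` does not involve `t_i`. -/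
theorem genCheb_degree_one_in_ti (n i : ℕ) (hn : 1 ≤ n) (hi1 : 1 ≤ i) (hin : i ≤ n) :
    MvPolynomial.degreeOf (Sum.inr i) (genCheb n Qv Tv) ≤ 1 ∧
      ∃ Q : MvPolynomial (ℕ ⊕ ℕ) ℤ,
        genCheb n Qv Tv =
          Tv i * (genCheb (i - 1) Qv Tv *
            genCheb (n - i) (fun j => Qv (i + j)) (fun j => Tv (i + j))) + Q ∧
        MvPolynomial.degreeOf (Sum.inr i) Q = 0 := by
  obtain ⟨Q, hQ, hdQ⟩ := genCheb_key n i hi1 hin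
  refine ⟨?_, Q, hQ, hdQ⟩
  rw [hQ]
  refine le_trans (MvPolynomial.degreeOf_add_le _ _ _) (max_le ?_ (by rw [hdQ]; omega))
  have ht : MvPolynomial.degreeOf (Sum.inr i) (Tv i) ≤ 1 := by
    rw [Tv, MvPolynomial.degreeOf_X]; simp
  have hAB : MvPolynomial.degreeOf (Sum.inr i)
      (genCheb (i - 1) Qv Tv *
        genCheb (n - i) (fun j => Qv (i + j)) (fun j => Tv (i + j))) = 0 :=
    Nat.le_zero.mp (le_trans (MvPolynomial.degreeOf_mul_le _ _ _)
      (by rw [genCheb_low i (i-1) (by omega), genCheb_shift i (n-i)]))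
  exact le_trans (MvPolynomial.degreeOf_mul_le _ _ _) (by rw [hAB, add_zero]; exact ht)
end
end

section
/- Let n ≥ 1 and let 0 = i_0 < i_1 < i_2 < ⋯ < i_k < i_{k+1} = n+1 with 1 ≤ i_1 and i_k ≤ n. Then the iterated formal partial derivative ∂^k P_n/∂t_{i_1}⋯∂t_{i_k} of the n-th quantized generalized Chebyshev polynomial equals the product over j = 0,…,k of P_{i_{j+1}−i_j−1}(q_{i_j+1},…,q_{i_{j+1}−1}, t_{i_j+1},…,t_{i_{j+1}−1}), where P_0 = 1. -/
noncomputable section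

open MvPolynomial

lemma genCheb_pderiv_zero : ∀ (n a i : ℕ), i ≤ a ∨ a + n < i →
    pderiv (Sum.inr i) (genCheb n (fun m => Qv (a + m)) (fun m => Tv (a + m))) = 0
  | 0, a, i, h => by simp [genCheb]
  | 1, a, i, h => by
      have hne : (Sum.inr (a + 1) : ℕ ⊕ ℕ) ≠ Sum.inr i := by simp; omega
      simp [genCheb, Tv, pderiv_X_of_ne hne]
  | n + 2, a, i, h => by
      have h1 := genCheb_pderiv_zero (n + 1) a i (by omega)
      have h0 := genCheb_pderiv_zero n a i (by omega)
      have ht : (Sum.inr (a + (n + 2)) : ℕ ⊕ ℕ) ≠ Sum.inr i := by simp; omega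
      have hq : (Sum.inl (a + (n + 2)) : ℕ ⊕ ℕ) ≠ Sum.inr i := by simp
      simp only [Tv, Qv] at h1 h0 ⊢
      simp [genCheb, pderiv_mul, h1, h0, pderiv_X_of_ne ht, pderiv_X_of_ne hq]

lemma genCheb_pderiv_top : ∀ (i a : ℕ), 1 ≤ i →
    pderiv (Sum.inr (a + i)) (genCheb i (fun m => Qv (a + m)) (fun m => Tv (a + m))) =
      genCheb (i - 1) (fun m => Qv (a + m)) (fun m => Tv (a + m))
  | 0, a, h => by omega
  | 1, a, _ => by simp [genCheb, Tv, pderiv_X_self]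
  | (j + 2), a, _ => by
      have h1 := genCheb_pderiv_zero (j + 1) a (a + (j + 2)) (by omega)
      have h0 := genCheb_pderiv_zero j a (a + (j + 2)) (by omega)
      have hq : (Sum.inl (a + (j + 2)) : ℕ ⊕ ℕ) ≠ Sum.inr (a + (j + 2)) := by simp
      simp only [Tv, Qv] at h1 h0 ⊢
      simp [genCheb, pderiv_mul, h1, h0, pderiv_X_self, pderiv_X_of_ne hq]

lemma genCheb_pderiv_mid : ∀ (d i a : ℕ), 1 ≤ i →
    pderiv (Sum.inr (a + i)) (genCheb (i + d) (fun m => Qv (a + m)) (fun m => Tv (a + m))) =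
      genCheb (i - 1) (fun m => Qv (a + m)) (fun m => Tv (a + m)) *
        genCheb d (fun m => Qv (a + i + m)) (fun m => Tv (a + i + m))
  | 0, i, a, hi => by
      rw [Nat.add_zero]
      simp [genCheb, genCheb_pderiv_top i a hi]
  | 1, i, a, hi => by
      obtain ⟨j, rfl⟩ : ∃ j, i = j + 1 := ⟨i - 1, by omega⟩
      have h0 := genCheb_pderiv_zero j a (a + (j + 1)) (by omega)
      have htop := genCheb_pderiv_top (j + 1) a (by omega)
      have hTne : (Sum.inr (a + (j + 1 + 1)) : ℕ ⊕ ℕ) ≠ Sum.inr (a + (j + 1)) := by simp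
      have hq : (Sum.inl (a + (j + 1 + 1)) : ℕ ⊕ ℕ) ≠ Sum.inr (a + (j + 1)) := by simp
      have hidx : a + (j + 1) + 1 = a + (j + 1 + 1) := by ring
      simp only [Tv, Qv] at h0 htop ⊢
      simp [genCheb, pderiv_mul, h0, htop, pderiv_X_of_ne hTne, pderiv_X_of_ne hq, hidx,
        mul_comm]
  | (d + 2), i, a, hi => by
      have hd1 := genCheb_pderiv_mid (d + 1) i a hi
      have hd0 := genCheb_pderiv_mid d i a hi
      have harith : i + (d + 2) = (i + d) + 2 := by ring
      rw [harith]
      have hTne : (Sum.inr (a + (i + d + 2)) : ℕ ⊕ ℕ) ≠ Sum.inr (a + i) := by simp; omega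
      have hq : (Sum.inl (a + (i + d + 2)) : ℕ ⊕ ℕ) ≠ Sum.inr (a + i) := by simp
      have e1 : i + d + 1 = i + (d + 1) := by ring
      have e2 : a + (i + d + 2) = a + i + (d + 2) := by ring
      rw [show genCheb (i + d + 2) (fun m => Qv (a + m)) (fun m => Tv (a + m)) =
            Tv (a + (i + d + 2)) * genCheb (i + d + 1) (fun m => Qv (a + m)) (fun m => Tv (a + m))
              - Qv (a + (i + d + 2)) * genCheb (i + d) (fun m => Qv (a + m)) (fun m => Tv (a + m))
          from rfl]
      rw [map_sub, pderiv_mul, pderiv_mul, e1, hd1, hd0]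
      rw [show (pderiv (Sum.inr (a + i))) (Tv (a + (i + d + 2))) = 0 from pderiv_X_of_ne hTne]
      rw [show (pderiv (Sum.inr (a + i))) (Qv (a + (i + d + 2))) = 0 from pderiv_X_of_ne hq]
      rw [show genCheb (d + 2) (fun m => Qv (a + i + m)) (fun m => Tv (a + i + m)) =
            Tv (a + i + (d + 2)) * genCheb (d + 1) (fun m => Qv (a + i + m)) (fun m => Tv (a + i + m))
              - Qv (a + i + (d + 2)) * genCheb d (fun m => Qv (a + i + m)) (fun m => Tv (a + i + m))
          from rfl]
      rw [e2]
      ring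

lemma pderiv_prod_zero {ι : Type*} (s : Finset ι) (f : ι → MvPolynomial (ℕ ⊕ ℕ) ℤ)
    (v : ℕ ⊕ ℕ) (h : ∀ j ∈ s, pderiv v (f j) = 0) :
    pderiv v (∏ j ∈ s, f j) = 0 := by
  classical
  induction s using Finset.induction_on with
  | empty => simp
  | @insert x s hx ih =>
      rw [Finset.prod_insert hx, pderiv_mul, h x (Finset.mem_insert_self x s),
        ih fun j hj => h j (Finset.mem_insert_of_mem hj)]
      ring

lemma aux_cheb : ∀ (k n : ℕ), 1 ≤ n → ∀ (E : ℕ → ℕ),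
    (∀ a b : ℕ, a < b → b ≤ k + 1 → E a < E b) → E 0 = 0 → E (k + 1) = n + 1 →
    (List.ofFn fun j : Fin k => (Sum.inr (E ((j : ℕ) + 1)) : ℕ ⊕ ℕ)).foldr
        (fun v p => MvPolynomial.pderiv v p) (genCheb n Qv Tv) =
      ∏ j : Fin (k + 1),
        genCheb (E ((j : ℕ) + 1) - E (j : ℕ) - 1)
          (fun m => Qv (E (j : ℕ) + m)) (fun m => Tv (E (j : ℕ) + m)) := by
  intro k
  induction k with
  | zero =>
      intro n hn E hm h0 hl
      rw [List.ofFn_zero, List.foldr_nil, Fin.prod_univ_succ, Fin.prod_univ_zero, mul_one]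
      simp only [Fin.val_zero, h0, Nat.zero_add, hl]
      have h2 : n + 1 - 0 - 1 = n := by omega
      rw [h2]
  | succ k IH =>
      intro n hn E hm h0 hl
      set E' : ℕ → ℕ := fun m => if m = 0 then 0 else E (m + 1) with hE'
      have hm' : ∀ a b : ℕ, a < b → b ≤ k + 1 → E' a < E' b := by
        intro a b hab hb
        have h1 := hm 0 (b + 1) (by omega) (by omega)
        have h2 := hm (a + 1) (b + 1) (by omega) (by omega)
        rw [h0] at h1
        simp only [hE']
        split_ifs <;> omega
      have h0' : E' 0 = 0 := by simp [hE']
      have hl' : E' (k + 1) = n + 1 := by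
        simp only [hE', if_neg (by omega : ¬ k + 1 = 0)]
        exact hl
      have hIH := IH n hn E' hm' h0' hl'
      have hlist : (List.ofFn fun i : Fin k =>
            (Sum.inr (E (((i.succ : Fin (k + 1)) : ℕ) + 1)) : ℕ ⊕ ℕ)) =
          List.ofFn fun j : Fin k => (Sum.inr (E' ((j : ℕ) + 1)) : ℕ ⊕ ℕ) := by
        congr 1
      rw [List.ofFn_succ, List.foldr_cons, hlist, hIH]
      simp only [Fin.val_zero, Nat.zero_add]
      rw [Fin.prod_univ_succ, pderiv_mul]
      rw [Fin.prod_univ_succ]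
      rw [Fin.prod_univ_succ]
      have hE0 : E' 0 = 0 := h0'
      have hE1 : ∀ m : ℕ, E' (m + 1) = E (m + 2) := fun m => by
        simp only [hE', if_neg (Nat.succ_ne_zero m)]
      have hE1' : E' 1 = E 2 := hE1 0
      have arith1 : ∀ m : ℕ, m + 1 + 1 = m + 2 := fun m => rfl
      have arith2 : ∀ m : ℕ, m + 1 + 2 = m + 3 := fun m => rfl
      simp only [Fin.val_zero, Fin.val_succ, Nat.zero_add, hE0, hE1', hE1, h0, Nat.sub_zero]
      show (MvPolynomial.pderiv (Sum.inr (E 1)))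
            (genCheb (E 2 - 1) (fun m => Qv m) fun m => Tv m) *
          (∏ x : Fin k, genCheb (E ((x : ℕ) + 3) - E ((x : ℕ) + 2) - 1)
            (fun m => Qv (E ((x : ℕ) + 2) + m)) fun m => Tv (E ((x : ℕ) + 2) + m)) +
        (genCheb (E 2 - 1) (fun m => Qv m) fun m => Tv m) *
          (MvPolynomial.pderiv (Sum.inr (E 1)))
            (∏ x : Fin k, genCheb (E ((x : ℕ) + 3) - E ((x : ℕ) + 2) - 1)
              (fun m => Qv (E ((x : ℕ) + 2) + m)) fun m => Tv (E ((x : ℕ) + 2) + m)) =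
        (genCheb (E 1 - 1) (fun m => Qv m) fun m => Tv m) *
          ((genCheb (E 2 - E 1 - 1) (fun m => Qv (E 1 + m)) fun m => Tv (E 1 + m)) *
            ∏ x : Fin k, genCheb (E ((x : ℕ) + 3) - E ((x : ℕ) + 2) - 1)
              (fun m => Qv (E ((x : ℕ) + 2) + m)) fun m => Tv (E ((x : ℕ) + 2) + m))
      have hz : (MvPolynomial.pderiv (Sum.inr (E 1)))
          (∏ x : Fin k, genCheb (E ((x : ℕ) + 3) - E ((x : ℕ) + 2) - 1)
            (fun m => Qv (E ((x : ℕ) + 2) + m)) fun m => Tv (E ((x : ℕ) + 2) + m)) = 0 := by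
        apply pderiv_prod_zero
        intro j _
        apply genCheb_pderiv_zero
        left
        have hj := j.isLt
        have := hm 1 ((j : ℕ) + 2) (by omega) (by omega)
        omega
      rw [hz, mul_zero, add_zero]
      have hi1 : 1 ≤ E 1 := by have := hm 0 1 (by omega) (by omega); omega
      have h12 : E 1 < E 2 := hm 1 2 (by omega) (by omega)
      have hsplit : E 2 - 1 = E 1 + (E 2 - E 1 - 1) := by omega
      rw [hsplit]
      have hmid := genCheb_pderiv_mid (E 2 - E 1 - 1) (E 1) 0 hi1
      simp only [Nat.zero_add] at hmid
      rw [hmid]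
      ring

/-- Let `0 = i_0 < i_1 < ⋯ < i_k < i_{k+1} = n+1` (encoded as a strictly monotone
`e : Fin (k+2) → ℕ` with `e 0 = 0` and `e (last) = n+1`).  Then
`∂^k P_n/∂t_{i_1}⋯∂t_{i_k} = ∏_{j=0}^{k}
P_{i_{j+1}-i_j-1}(q_{i_j+1},…,q_{i_{j+1}-1},t_{i_j+1},…,t_{i_{j+1}-1})`. -/
theorem iterated_pderiv_genCheb (n k : ℕ) (hn : 1 ≤ n)
    (e : Fin (k + 2) → ℕ) (hmono : StrictMono e)
    (h0 : e 0 = 0) (hlast : e (Fin.last (k + 1)) = n + 1) :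
    (List.ofFn fun j : Fin k => (Sum.inr (e j.succ.castSucc) : ℕ ⊕ ℕ)).foldr
        (fun v p => MvPolynomial.pderiv v p) (genCheb n Qv Tv) =
      ∏ j : Fin (k + 1),
        genCheb (e j.succ - e j.castSucc - 1)
          (fun m => Qv (e j.castSucc + m)) (fun m => Tv (e j.castSucc + m)) := by
  set E : ℕ → ℕ := fun m => e ⟨min m (k + 1), by omega⟩ with hE
  have hEe : ∀ (i : Fin (k + 2)), E (i : ℕ) = e i := by
    intro i
    have hi := i.isLt
    simp only [hE]
    congr 1
    ext
    simp
    omega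
  have hm : ∀ a b : ℕ, a < b → b ≤ k + 1 → E a < E b := by
    intro a b hab hb
    simp only [hE]
    apply hmono
    simp [Fin.lt_def]
    omega
  have hE0 : E 0 = 0 := by
    have := hEe 0
    simp only [Fin.val_zero] at this
    rw [this, h0]
  have hElast : E (k + 1) = n + 1 := by
    have := hEe (Fin.last (k + 1))
    simp only [Fin.val_last] at this
    rw [this, hlast]
  have haux := aux_cheb k n hn E hm hE0 hElast
  have hlist : (List.ofFn fun j : Fin k => (Sum.inr (E ((j : ℕ) + 1)) : ℕ ⊕ ℕ)) =
      List.ofFn fun j : Fin k => (Sum.inr (e j.succ.castSucc) : ℕ ⊕ ℕ) := by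
    congr 1
    funext j
    congr 1
    rw [show ((j : ℕ) + 1) = ((j.succ.castSucc : Fin (k + 2)) : ℕ) by simp]
    exact hEe _
  rw [hlist] at haux
  rw [haux]
  apply Finset.prod_congr rfl
  intro j _
  have h1 : E ((j : ℕ) + 1) = e j.succ := by
    rw [show ((j : ℕ) + 1) = ((j.succ : Fin (k + 2)) : ℕ) by simp]
    exact hEe _
  have h2 : E (j : ℕ) = e j.castSucc := by
    rw [show ((j : ℕ)) = ((j.castSucc : Fin (k + 2)) : ℕ) by simp]
    exact hEe _
  rw [h1, h2]
end
end

section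
/- In the Laurent polynomial ring ℤ[q_1,q_2][t_1^{±1},t_2^{±1},t_3^{±1}], substituting t_1 + q_1/t_2 and t_2 + q_2/t_3 for the two t-variables of Δ_{1,2} gives Δ_{1,2}(q_1, q_2, t_1 + q_1/t_2, t_2 + q_2/t_3) = (t_1t_2²t_3 + q_2(t_1t_2 − t_2t_3) + q_1q_2)/(t_2t_3); moreover this element is NOT a ℤ_{≥0}-linear combination of Laurent monomials in t_1, t_2, t_3 with polynomial monomials in q_1, q_2, i.e. it does not lie in ℤ_{≥0}[q_1,q_2,t_1^{±1},t_2^{±1},t_3^{±1}]. -/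
/-! Evaluate at `q = 1` and `t_j = 4^(j-2)`, i.e. `(t_1, t_2, t_3) = (1/4, 1, 4)`: every generator
of the semiring `ℤ_{≥0}[q_1,q_2,t_1^{±1},t_2^{±1},t_3^{±1}]` is positive there, while
`Δ_{1,2}(q_1, q_2, t_1 + q_1/t_2, t_2 + q_2/t_3)` takes the value `(5/4)² - 2 < 0`. -/

noncomputable section

/-- The Δ-polynomial:
`Δ(N; q, t) = P_N(q_1,…,q_N,t_1,…,t_N) - q_1·P_{N-2}(q_2,…,q_{N-1},t_2,…,t_{N-1})`.
For `N = 2` this is `Δ_{1,2}(q_1,q_2,t_1,t_2) = t_2·t_1 - q_2 - q_1`. -/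
def Delta {R : Type*} [CommRing R] (N : ℕ) (q t : ℕ → R) : R :=
  genCheb N q t - q 1 * genCheb (N - 2) (fun j => q (1 + j)) (fun j => t (1 + j))

/-- The Laurent polynomial ring `ℤ[q_1,q_2,…][t_1^{±1},t_2^{±1},…]`,
realized as the monoid algebra over `ℤ[q_1,q_2,…]` of the group of Laurent
monomials in the `t`'s. -/
abbrev LaurentQ : Type := AddMonoidAlgebra (MvPolynomial ℕ ℤ) (ℕ →₀ ℤ)

/-- The element `q_i`. -/
def ql (i : ℕ) : LaurentQ := AddMonoidAlgebra.single 0 (MvPolynomial.X i)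

/-- The element `t_j`. -/
def tl (j : ℕ) : LaurentQ := AddMonoidAlgebra.single (Finsupp.single j 1) 1

/-- The element `t_j⁻¹`. -/
def tlinv (j : ℕ) : LaurentQ := AddMonoidAlgebra.single (Finsupp.single j (-1)) 1

theorem Delta_two {R : Type*} [CommRing R] (q t : ℕ → R) :
    Delta 2 q t = t 2 * t 1 - q 2 - q 1 := by
  simp only [Delta, genCheb, Nat.sub_self]
  ring

theorem tl_mul_tlinv (j : ℕ) : tl j * tlinv j = 1 := by
  rw [tl, tlinv, AddMonoidAlgebra.single_mul_single, ← Finsupp.single_add, add_neg_cancel,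
    Finsupp.single_zero, mul_one]
  rfl

def evalAt {R : Type*} [CommRing R] (qv : ℕ → R) (tv : ℕ → Rˣ) : LaurentQ →+* R :=
  AddMonoidAlgebra.liftNCRingHom (MvPolynomial.eval₂Hom (Int.castRingHom R) qv)
    ((Units.coeHom R).comp (AddMonoidHom.toMultiplicativeLeft
      (Finsupp.liftAddHom fun i => zmultiplesHom (Additive Rˣ) (Additive.ofMul (tv i)))))
    (fun _ _ => Commute.all _ _)

section evalAt

variable {R : Type*} [CommRing R] (qv : ℕ → R) (tv : ℕ → Rˣ)

@[simp]
theorem evalAt_ql (i : ℕ) : evalAt qv tv (ql i) = qv i := by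
  simp [evalAt, ql]

@[simp]
theorem evalAt_tl (j : ℕ) : evalAt qv tv (tl j) = tv j := by
  simp [evalAt, tl]

@[simp]
theorem evalAt_tlinv (j : ℕ) : evalAt qv tv (tlinv j) = ↑(tv j)⁻¹ := by
  simp [evalAt, tlinv, -Finsupp.single_neg]

end evalAt

theorem RingHom.nonneg_of_mem_closure {R S : Type*} [Semiring R] [Semiring S] [PartialOrder S]
    [IsOrderedRing S] (f : R →+* S) {s : Set R} (hs : ∀ x ∈ s, 0 ≤ f x) {x : R}
    (hx : x ∈ Subsemiring.closure s) : 0 ≤ f x :=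
  (Subsemiring.closure_le (t := (Subsemiring.nonneg S).comap f)).mpr hs hx

def powFour (j : ℕ) : ℚˣ := Units.mk0 4 four_ne_zero ^ ((j : ℤ) - 2)

theorem evalAt_one_powFour_nonneg {x : LaurentQ}
    (hx : ∃ i, 1 ≤ i ∧ i ≤ 3 ∧ ((i ≤ 2 ∧ x = ql i) ∨ x = tl i ∨ x = tlinv i)) :
    0 ≤ evalAt 1 powFour x := by
  obtain ⟨i, -, -, ⟨-, rfl⟩ | rfl | rfl⟩ := hx <;>
    simp only [evalAt_ql, evalAt_tl, evalAt_tlinv, powFour, Pi.one_apply,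
      Units.val_inv_eq_inv_val, Units.val_zpow_eq_zpow_val, Units.val_mk0] <;>
    positivity

theorem evalAt_one_powFour_Delta_subst :
    evalAt 1 powFour (Delta 2 (fun i => ql i) (fun i => tl i + ql i * tlinv (i + 1))) =
      -7 / 16 := by
  norm_num [Delta_two, powFour]

/-- `Δ_{1,2}(q_1, q_2, t_1 + q_1/t_2, t_2 + q_2/t_3)
= (t_1·t_2²·t_3 + q_2·(t_1·t_2 - t_2·t_3) + q_1·q_2)/(t_2·t_3)` (stated by
multiplying through by the unit `t_2·t_3`), and this element does NOT lie in
`ℤ_{≥0}[q_1,q_2,t_1^{±1},t_2^{±1},t_3^{±1}]`. -/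
theorem Delta12_subst_noncyclic :
    Delta 2 (fun i => ql i) (fun i => tl i + ql i * tlinv (i + 1)) *
        (tl 2 * tl 3) =
      tl 1 * tl 2 ^ 2 * tl 3 + ql 2 * (tl 1 * tl 2 - tl 2 * tl 3) + ql 1 * ql 2 ∧
    Delta 2 (fun i => ql i) (fun i => tl i + ql i * tlinv (i + 1)) ∉
      Subsemiring.closure
        {x : LaurentQ |
          ∃ i, 1 ≤ i ∧ i ≤ 3 ∧ ((i ≤ 2 ∧ x = ql i) ∨ x = tl i ∨ x = tlinv i)} := by
  constructor
  · simp only [Delta_two, Nat.reduceAdd]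
    linear_combination
      (ql 1 * tl 2 * tl 3 + ql 1 * ql 2 * tl 3 * tlinv 3) * tl_mul_tlinv 2 +
      (ql 2 * tl 1 * tl 2 + ql 1 * ql 2) * tl_mul_tlinv 3
  · intro hmem
    have hnonneg := RingHom.nonneg_of_mem_closure (evalAt 1 powFour)
      (fun _ => evalAt_one_powFour_nonneg) hmem
    rw [evalAt_one_powFour_Delta_subst] at hnonneg
    norm_num at hnonneg
end
end

section
/- For every n ≥ 0, there exist nonnegative integers c_0, c_1, …, c_{⌊n/2⌋} such that x^n = Σ_{k=0}^{⌊n/2⌋} c_k · S_{n−2k}(x) in ℤ[x]; that is, the monomial x^n is a ℤ_{≥0}-linear combination of the normalized Chebyshev polynomials of the second kind S_k with k ≤ n. -/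
noncomputable section

/-- The normalized Chebyshev polynomials of the second kind:
`S_0 = 1`, `S_1 = x`, `S_{n+2} = x·S_{n+1} - S_n`. -/
def chebS : ℕ → Polynomial ℤ
  | 0 => 1
  | 1 => Polynomial.X
  | n + 2 => Polynomial.X * chebS (n + 1) - chebS n

lemma chebS_mul_X (m : ℕ) :
    Polynomial.X * chebS m = chebS (m + 1) + if m = 0 then 0 else chebS (m - 1) := by
  match m with
  | 0 => simp [chebS]
  | m + 1 => simp [chebS]

/-- For every n ≥ 0 there are nonnegative integers `c_0,…,c_{⌊n/2⌋}` with
`x^n = Σ_{k=0}^{⌊n/2⌋} c_k · S_{n-2k}(x)` in `ℤ[x]`. -/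
theorem X_pow_eq_sum_chebS (n : ℕ) :
    ∃ c : ℕ → ℕ,
      (Polynomial.X : Polynomial ℤ) ^ n =
        ∑ k ∈ Finset.range (n / 2 + 1), (c k : Polynomial ℤ) * chebS (n - 2 * k) := by
  induction n with
  | zero => exact ⟨fun _ => 1, by simp [chebS]⟩
  | succ n ih =>
    obtain ⟨c, hc⟩ := ih
    refine ⟨fun j => (if j ≤ n / 2 then c j else 0) + (if 1 ≤ j then c (j - 1) else 0), ?_⟩
    have key : (Polynomial.X : Polynomial ℤ) ^ (n + 1) =
        (∑ k ∈ Finset.range (n / 2 + 1), (c k : Polynomial ℤ) * chebS (n + 1 - 2 * k))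
        + ∑ k ∈ Finset.range ((n + 1) / 2), (c k : Polynomial ℤ) * chebS (n - 1 - 2 * k) := by
      have h1 : (Polynomial.X : Polynomial ℤ) ^ (n + 1)
          = ∑ k ∈ Finset.range (n / 2 + 1),
              (c k : Polynomial ℤ) * (Polynomial.X * chebS (n - 2 * k)) := by
        rw [pow_succ, mul_comm, hc, Finset.mul_sum]
        exact Finset.sum_congr rfl fun k _ => by ring
      rw [h1]
      have h2 : ∀ k ∈ Finset.range (n / 2 + 1),
          (c k : Polynomial ℤ) * (Polynomial.X * chebS (n - 2 * k))
          = (c k : Polynomial ℤ) * chebS (n + 1 - 2 * k)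
            + (c k : Polynomial ℤ) * (if n - 2 * k = 0 then 0 else chebS (n - 2 * k - 1)) := by
        intro k hk
        rw [chebS_mul_X, mul_add]
        have : n - 2 * k + 1 = n + 1 - 2 * k := by
          simp only [Finset.mem_range] at hk; omega
        rw [this]
      rw [Finset.sum_congr rfl h2, Finset.sum_add_distrib]
      congr 1
      rw [← Finset.sum_subset (Finset.range_subset_range.2 (by omega :
          (n + 1) / 2 ≤ n / 2 + 1))]
      · refine Finset.sum_congr rfl fun k hk => ?_
        simp only [Finset.mem_range] at hk
        have h0 : n - 2 * k ≠ 0 := by omega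
        have h1 : n - 2 * k - 1 = n - 1 - 2 * k := by omega
        rw [if_neg h0, h1]
      · intro k hk1 hk2
        simp only [Finset.mem_range] at hk1 hk2
        have : n - 2 * k = 0 := by omega
        rw [this, if_pos rfl, mul_zero]
    rw [key]
    push_cast
    rw [Finset.sum_congr rfl (fun j _ => add_mul
      ((if j ≤ n / 2 then (c j : Polynomial ℤ) else 0))
      ((if 1 ≤ j then (c (j - 1) : Polynomial ℤ) else 0)) (chebS (n + 1 - 2 * j))),
      Finset.sum_add_distrib]
    congr 1
    · rw [← Finset.sum_subset (Finset.range_subset_range.2 (by omega :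
          n / 2 + 1 ≤ (n + 1) / 2 + 1))]
      · exact Finset.sum_congr rfl fun j hj => by
          simp only [Finset.mem_range] at hj
          rw [if_pos (by omega : j ≤ n / 2)]
      · intro j hj1 hj2
        simp only [Finset.mem_range] at hj1 hj2
        rw [if_neg (by omega : ¬ j ≤ n / 2), zero_mul]
    · rw [Finset.sum_range_succ']
      simp only [Nat.lt_irrefl, if_neg (by omega : ¬ (1:ℕ) ≤ 0), zero_mul, add_zero]
      refine Finset.sum_congr rfl fun i hi => ?_
      simp only [Finset.mem_range] at hi
      rw [if_pos (by omega : 1 ≤ i + 1)]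
      have : n + 1 - 2 * (i + 1) = n - 1 - 2 * i := by omega
      simp [this]
end
end
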